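/- Let X be a locally compact abelian group and 𝔣 a filter on X with 𝔣 = 𝔣° (equal to its envelope, i.e. the filter generated by the sets F + V with F ∈ 𝔣, V a neighborhood of 0). Then for each F ∈ 𝔣 there exist an open set G ∈ 𝔣 with G ⊆ F and a bounded uniformly continuous function θ : X → [0,1] such that θ = 1 on G and θ = 0 on X ∖ F. -/

import Mathlib

/-!
Since `𝔣` equals its envelope `𝔣 + 𝓝 0`, every `F ∈ 𝔣` contains some `F' + W` with `F' ∈ 𝔣` and
`W` a neighbourhood of `0`. Local compactness and Urysohn's lemma give a compactly supported, hence
uniformly continuous, `f : X → [0,1]` equal to `1` on an open `U ∋ 0` and to `0` off `W`. The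
supremum `θ x = ⨆ a ∈ F', f (x - a)` of the translates of `f` is uniformly continuous because the
translates are uniformly equicontinuous; it equals `1` on `G = F' + U` and `0` off `F' + W ⊆ F`.
-/

open Filter Topology Pointwise Set

theorem Filter.add_eq_generate {α : Type*} [Add α] (f g : Filter α) :
    f + g = generate {s | ∃ t₁ ∈ f, ∃ t₂ ∈ g, s = t₁ + t₂} := by
  refine le_antisymm (le_generate_iff.2 ?_) fun s hs => ?_
  · rintro _ ⟨t₁, ht₁, t₂, ht₂, rfl⟩
    exact add_mem_add ht₁ ht₂
  · obtain ⟨t₁, ht₁, t₂, ht₂, hs⟩ := mem_add.1 hs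
    exact mem_of_superset (mem_generate_of_mem ⟨t₁, ht₁, t₂, ht₂, rfl⟩) hs

theorem UniformContinuous.uniformEquicontinuous_sub_right {G β : Type*} [UniformSpace G]
    [AddGroup G] [IsRightUniformAddGroup G] [UniformSpace β] {f : G → β}
    (hf : UniformContinuous f) : UniformEquicontinuous fun a x : G => f (x - a) := by
  intro U hU
  have hfU := hf hU
  rw [uniformity_eq_comap_nhds_zero G] at hfU ⊢
  obtain ⟨N, hN, hNU⟩ := mem_comap.1 hfU
  filter_upwards [preimage_mem_comap hN] with p hp a
  exact @hNU (p.1 - a, p.2 - a) (by simpa only [mem_preimage, sub_sub_sub_cancel_right] using hp)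

theorem Real.iSup_le_iSup_add {ι : Sort*} {f g : ι → ℝ} {ε : ℝ} (hg : BddAbove (range g))
    (hg₀ : ∀ i, 0 ≤ g i) (hε : 0 ≤ ε) (hfg : ∀ i, f i ≤ g i + ε) : ⨆ i, f i ≤ (⨆ i, g i) + ε :=
  Real.iSup_le (fun i => (hfg i).trans (add_le_add_left (le_ciSup hg i) ε)) <|
    add_nonneg (Real.iSup_nonneg hg₀) hε

theorem UniformEquicontinuous.uniformContinuous_iSup {ι α : Type*} [UniformSpace α]
    {F : ι → α → ℝ} (hF : UniformEquicontinuous F) (hF₀ : ∀ i x, 0 ≤ F i x)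
    (hbdd : ∀ x, BddAbove (range fun i => F i x)) : UniformContinuous fun x => ⨆ i, F i x := by
  rw [Metric.uniformity_basis_dist_le.uniformEquicontinuous_iff_right] at hF
  refine Metric.uniformity_basis_dist_le.tendsto_right_iff.2 fun ε hε => ?_
  filter_upwards [hF ε hε] with ⟨x, y⟩ hxy
  have hxy' : ∀ i, |F i x - F i y| ≤ ε := hxy
  refine abs_sub_le_iff.2 ⟨?_, ?_⟩ <;> rw [sub_le_iff_le_add']
  · exact Real.iSup_le_iSup_add (hbdd y) (hF₀ · y) hε.le fun i => by
      linarith [(abs_sub_le_iff.1 (hxy' i)).1]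
  · exact Real.iSup_le_iSup_add (hbdd x) (hF₀ · x) hε.le fun i => by
      linarith [(abs_sub_le_iff.1 (hxy' i)).2]

theorem exists_uniformContinuous_one_zero_of_mem_nhds {X : Type*} [UniformSpace X]
    [LocallyCompactSpace X] {x : X} {W : Set X} (hW : W ∈ 𝓝 x) :
    ∃ U ⊆ W, IsOpen U ∧ x ∈ U ∧ ∃ f : X → ℝ, UniformContinuous f ∧
      (∀ y, f y ∈ Icc (0 : ℝ) 1) ∧ EqOn f 1 U ∧ EqOn f 0 Wᶜ := by
  obtain ⟨K, hK, hKW, hKc⟩ :=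
    LocallyCompactSpace.local_compact_nhds x _ (interior_mem_nhds.2 hW)
  obtain ⟨f, hf₁, hf₀, hfc, hf⟩ := exists_continuous_one_zero_of_isCompact hKc
    isOpen_interior.isClosed_compl (disjoint_compl_right_iff_subset.2 hKW)
  refine ⟨interior K, interior_subset.trans (hKW.trans interior_subset), isOpen_interior,
    mem_interior_iff_mem_nhds.2 hK, f, hfc.uniformContinuous_of_continuous f.continuous, hf,
    hf₁.mono interior_subset, hf₀.mono (compl_subset_compl.2 interior_subset)⟩

theorem exists_uniformContinuous_one_add_zero_compl_add {X : Type*} [UniformSpace X]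
    [AddCommGroup X] [IsUniformAddGroup X] [LocallyCompactSpace X] (A : Set X) {W : Set X}
    (hW : W ∈ 𝓝 0) :
    ∃ U ⊆ W, IsOpen U ∧ (0 : X) ∈ U ∧ ∃ θ : X → ℝ, UniformContinuous θ ∧
      (∀ x, θ x ∈ Icc (0 : ℝ) 1) ∧ EqOn θ 1 (A + U) ∧ EqOn θ 0 (A + W)ᶜ := by
  obtain ⟨U, hUW, hU, h0U, f, hfu, hf, hf₁, hf₀⟩ :=
    exists_uniformContinuous_one_zero_of_mem_nhds hW
  have hbdd : ∀ x, BddAbove (range fun a : A => f (x - a)) :=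
    fun x => ⟨1, forall_mem_range.2 fun a => (hf _).2⟩
  have hθ : ∀ x, (⨆ a : A, f (x - a)) ∈ Icc (0 : ℝ) 1 :=
    fun x => ⟨Real.iSup_nonneg fun a => (hf _).1, Real.iSup_le (fun a => (hf _).2) zero_le_one⟩
  have hθu : UniformContinuous fun x => ⨆ a : A, f (x - a) :=
    (hfu.uniformEquicontinuous_sub_right.comp Subtype.val).uniformContinuous_iSup
      (fun a x => (hf _).1) hbdd
  refine ⟨U, hUW, hU, h0U, _, hθu, hθ, ?_, fun x hx => ?_⟩
  · rintro _ ⟨a, ha, u, hu, rfl⟩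
    refine le_antisymm (hθ _).2 (le_ciSup_of_le (hbdd _) ⟨a, ha⟩ ?_)
    rw [add_sub_cancel_left]
    exact (hf₁ hu).ge
  · have hx_sub : ∀ a ∈ A, x - a ∉ W := fun a ha hxa =>
      hx ⟨a, ha, x - a, hxa, add_sub_cancel a x⟩
    exact le_antisymm (Real.iSup_le (fun a => (hf₀ (hx_sub a a.2)).le) le_rfl) (hθ x).1

/-- If a filter `𝔣` on a locally compact abelian group `X` equals its envelope
(the filter generated by the sets `F + V`, `F ∈ 𝔣`, `V ∈ 𝓝 0`), then for each
`F ∈ 𝔣` there are an open `G ∈ 𝔣` with `G ⊆ F` and a bounded uniformly continuous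
function `θ : X → [0,1]` with `θ = 1` on `G` and `θ = 0` outside `F`. -/
theorem stmt_3 {X : Type*} [UniformSpace X] [AddCommGroup X] [IsUniformAddGroup X]
    [LocallyCompactSpace X]
    (𝔣 : Filter X)
    (henv : 𝔣 = Filter.generate {S : Set X | ∃ F ∈ 𝔣, ∃ V ∈ 𝓝 (0 : X), S = F + V}) :
    ∀ F ∈ 𝔣, ∃ G ∈ 𝔣, IsOpen G ∧ G ⊆ F ∧
      ∃ θ : X → ℝ, UniformContinuous θ ∧ (∀ x, θ x ∈ Set.Icc (0 : ℝ) 1) ∧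
        (∀ x ∈ G, θ x = 1) ∧ (∀ x ∉ F, θ x = 0) := by
  intro F hF
  rw [henv, ← Filter.add_eq_generate] at hF
  obtain ⟨F', hF', W, hW, hFW⟩ := mem_add.1 hF
  obtain ⟨U, hUW, hU, h0U, θ, hθu, hθ, hθ₁, hθ₀⟩ :=
    exists_uniformContinuous_one_add_zero_compl_add F' hW
  exact ⟨F' + U, mem_of_superset hF' (subset_add_left F' h0U), hU.add_left,
    (add_subset_add_left hUW).trans hFW, θ, hθu, hθ, hθ₁,
    fun x hx => hθ₀ fun hx' => hx (hFW hx')⟩
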